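/- Let A : V → V' be linear, symmetric, bounded and coercive with constant c > 0, let K ⊆ V be nonempty, closed, convex, and let f ∈ V'. For ε ≥ 0 let E_ε(v) = (1/2)⟨A v, v⟩ + (ε/2)‖v‖²_H - ⟨f, v⟩ and suppose y_ε minimizes E_ε over K, while m minimizes E_0 over K. Then (c/2)‖y_ε - m‖²_V + (ε/2)‖y_ε‖²_H ≤ (ε/2)‖m‖²_H, and consequently ‖y_ε - m‖_V ≤ √(ε/c) · ‖m‖_H. -/

import Mathlib

/-!
`E_ε` is quadratic, so at the midpoint of `u` and `v` it lies below the mean of `E_ε u` and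
`E_ε v` by `⟨A(u - v), u - v⟩ / 8 + (ε/8)‖u - v‖²_H`. Comparing a minimizer over the convex set
`K` with such a midpoint gives quadratic growth away from the minimizer. Adding the growth
inequality for `y_ε` (tested at `m`) to the one for `m` (tested at `y_ε`) cancels everything
that `E_ε` and `E_0` have in common; only the `ε`-terms remain, and coercivity of `A` turns
the result into the estimate.
-/

section Midpoint

variable {V : Type*} [NormedAddCommGroup V] [NormedSpace ℝ V]

theorem apply_midpoint_midpoint_of_symm (A : V →L[ℝ] StrongDual ℝ V)
    (hsym : ∀ u v : V, A u v = A v u) (u v : V) :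
    A (midpoint ℝ u v) (midpoint ℝ u v) = (A u u + A v v) / 2 - A (u - v) (u - v) / 4 := by
  simp only [midpoint_eq_smul_add, map_smul, map_add, map_sub, smul_eq_mul,
    smul_apply, add_apply, sub_apply]
  rw [hsym v u]
  norm_num
  ring

theorem norm_midpoint_sq {H : Type*} [NormedAddCommGroup H] [InnerProductSpace ℝ H] (x y : H) :
    ‖midpoint ℝ x y‖ ^ 2 = (‖x‖ ^ 2 + ‖y‖ ^ 2) / 2 - ‖x - y‖ ^ 2 / 4 := by
  have := EuclideanGeometry.dist_sq_add_dist_sq_eq_two_mul_dist_midpoint_sq_add_half_dist_sq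
    (0 : H) x y
  simp only [dist_eq_norm, zero_sub, norm_neg] at this
  linarith

end Midpoint

section RegularizedEnergy

variable {V H : Type*} [NormedAddCommGroup V] [InnerProductSpace ℝ V]
  [NormedAddCommGroup H] [InnerProductSpace ℝ H]
  (A : V →L[ℝ] StrongDual ℝ V) (i : V →L[ℝ] H) (f : StrongDual ℝ V)

noncomputable def regularizedEnergy (ε : ℝ) (v : V) : ℝ :=
  (1 / 2) * A v v + (ε / 2) * ‖i v‖ ^ 2 - f v

variable {A}

theorem regularizedEnergy_eq_add (ε : ℝ) (v : V) :
    regularizedEnergy A i f ε v = regularizedEnergy A i f 0 v + (ε / 2) * ‖i v‖ ^ 2 := by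
  simp only [regularizedEnergy]
  ring

theorem regularizedEnergy_midpoint (hsym : ∀ u v : V, A u v = A v u) (ε : ℝ) (u v : V) :
    regularizedEnergy A i f ε (midpoint ℝ u v) =
      (regularizedEnergy A i f ε u + regularizedEnergy A i f ε v) / 2
        - A (u - v) (u - v) / 8 - (ε / 8) * ‖i (u - v)‖ ^ 2 := by
  have hi : i (midpoint ℝ u v) = midpoint ℝ (i u) (i v) :=
    (i : V →ₗ[ℝ] H).toAffineMap.map_midpoint u v
  have hf : f (midpoint ℝ u v) = (f u + f v) / 2 := by
    rw [midpoint_eq_smul_add, map_smul, map_add, smul_eq_mul]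
    norm_num
    ring
  simp only [regularizedEnergy]
  rw [apply_midpoint_midpoint_of_symm A hsym, hi, norm_midpoint_sq, hf, map_sub i]
  ring

theorem regularizedEnergy_quadratic_growth (hsym : ∀ u v : V, A u v = A v u) {K : Set V}
    (hK : Convex ℝ K) {ε : ℝ} {y v : V} (hy : y ∈ K) (hv : v ∈ K)
    (hmin : ∀ w ∈ K, regularizedEnergy A i f ε y ≤ regularizedEnergy A i f ε w) :
    regularizedEnergy A i f ε y + A (y - v) (y - v) / 4 + (ε / 4) * ‖i (y - v)‖ ^ 2 ≤
      regularizedEnergy A i f ε v := by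
  have := hmin _ (hK.midpoint_mem hy hv)
  rw [regularizedEnergy_midpoint i f hsym] at this
  linarith

end RegularizedEnergy

theorem le_sqrt_div_mul_of_mul_sq_le {c ε d b : ℝ} (hc : 0 < c) (hε : 0 ≤ ε) (hd : 0 ≤ d) (hb : 0 ≤ b)
    (h : c * d ^ 2 ≤ ε * b ^ 2) : d ≤ Real.sqrt (ε / c) * b := by
  rw [← Real.sqrt_sq hb, ← Real.sqrt_mul (div_nonneg hε hc.le), Real.le_sqrt hd
    (mul_nonneg (div_nonneg hε hc.le) (sq_nonneg b)), div_mul_eq_mul_div, le_div_iff₀ hc]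
  linarith

theorem regularized_energy_estimate_general
    {V H : Type*} [NormedAddCommGroup V] [InnerProductSpace ℝ V]
    [NormedAddCommGroup H] [InnerProductSpace ℝ H]
    (i : V →L[ℝ] H)
    (A : V →L[ℝ] StrongDual ℝ V)
    (hsym : ∀ u v : V, A u v = A v u)
    (c : ℝ) (hc : 0 < c) (hcoer : ∀ u : V, c * ‖u‖ ^ 2 ≤ A u u)
    (K : Set V) (hKconvex : Convex ℝ K)
    (f : StrongDual ℝ V)
    (Eε : ℝ → V → ℝ)
    (hEε : ∀ (ε : ℝ) (v : V), Eε ε v = (1 / 2) * A v v + (ε / 2) * ‖i v‖ ^ 2 - f v)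
    (ε : ℝ) (hε : 0 ≤ ε)
    (yε : V) (hyε : yε ∈ K) (hymin : ∀ v ∈ K, Eε ε yε ≤ Eε ε v)
    (m : V) (hm : m ∈ K) (hmmin : ∀ v ∈ K, Eε 0 m ≤ Eε 0 v) :
    (c / 2) * ‖yε - m‖ ^ 2 + (ε / 2) * ‖i yε‖ ^ 2 ≤ (ε / 2) * ‖i m‖ ^ 2 ∧
      ‖yε - m‖ ≤ Real.sqrt (ε / c) * ‖i m‖ := by
  obtain rfl : Eε = regularizedEnergy A i f := funext₂ hEε
  have hgrow_y := regularizedEnergy_quadratic_growth i f hsym hKconvex hyε hm hymin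
  have hgrow_m := regularizedEnergy_quadratic_growth i f hsym hKconvex hm hyε hmmin
  have hA : A (m - yε) (m - yε) = A (yε - m) (yε - m) := by
    rw [← neg_sub yε m]
    simp only [map_neg, neg_apply, neg_neg]
  rw [regularizedEnergy_eq_add i f ε yε, regularizedEnergy_eq_add i f ε m] at hgrow_y
  have hcoer := hcoer (yε - m)
  have hεy := mul_nonneg hε (sq_nonneg ‖i yε‖)
  have hεd := mul_nonneg hε (sq_nonneg ‖i (yε - m)‖)
  have key : (c / 2) * ‖yε - m‖ ^ 2 + (ε / 2) * ‖i yε‖ ^ 2 ≤ (ε / 2) * ‖i m‖ ^ 2 := by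
    linarith
  exact ⟨key, le_sqrt_div_mul_of_mul_sq_le hc hε (norm_nonneg _) (norm_nonneg _) (by linarith)⟩

/-- energy comparison for the regularized minimizer: if `y_ε` minimizes
`E_ε(v) = (1/2)⟨Av,v⟩ + (ε/2)‖v‖_H² - ⟨f,v⟩` over `K` and `m` minimizes `E_0` over `K`,
then `(c/2)‖y_ε - m‖_V² + (ε/2)‖y_ε‖_H² ≤ (ε/2)‖m‖_H²`, hence
`‖y_ε - m‖_V ≤ √(ε/c)·‖m‖_H`. -/
theorem regularized_energy_estimate
    {V H : Type*} [NormedAddCommGroup V] [InnerProductSpace ℝ V] [CompleteSpace V]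
    [NormedAddCommGroup H] [InnerProductSpace ℝ H] [CompleteSpace H]
    (i : V →L[ℝ] H)
    (A : V →L[ℝ] StrongDual ℝ V)
    (hsym : ∀ u v : V, A u v = A v u)
    (c : ℝ) (hc : 0 < c) (hcoer : ∀ u : V, c * ‖u‖ ^ 2 ≤ A u u)
    (K : Set V) (hK : K.Nonempty) (hKclosed : IsClosed K) (hKconvex : Convex ℝ K)
    (f : StrongDual ℝ V)
    (Eε : ℝ → V → ℝ)
    (hEε : ∀ (ε : ℝ) (v : V), Eε ε v = (1 / 2) * A v v + (ε / 2) * ‖i v‖ ^ 2 - f v)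
    (ε : ℝ) (hε : 0 ≤ ε)
    (yε : V) (hyε : yε ∈ K) (hymin : ∀ v ∈ K, Eε ε yε ≤ Eε ε v)
    (m : V) (hm : m ∈ K) (hmmin : ∀ v ∈ K, Eε 0 m ≤ Eε 0 v) :
    (c / 2) * ‖yε - m‖ ^ 2 + (ε / 2) * ‖i yε‖ ^ 2 ≤ (ε / 2) * ‖i m‖ ^ 2 ∧
      ‖yε - m‖ ≤ Real.sqrt (ε / c) * ‖i m‖ :=
  regularized_energy_estimate_general i A hsym c hc hcoer K hKconvex f Eε hEε ε hε yε hyε hymin m hm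
    hmmin
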